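/- Let (Sᵢ)_{i≥1} be nonnegative random variables adapted to a filtration with μᵢ = E[Sᵢ | G̃ᵢ] ≤ K almost surely for a constant K, and Σᵢ E|Sᵢ - μᵢ|²/i² < ∞, so that (1/n)Σ_{i≤n}(Sᵢ - μᵢ) → 0 a.s. Define X_t = sup{n : Σ_{i=0}^n Sᵢ ≤ t}. Then liminf_{t→∞} X_t/t ≥ 1/K almost surely. -/
import Mathlib


open MeasureTheory Filter
open scoped ENNReal

set_option maxHeartbeats 1000000 in
/-- Renewal-type lower bound. Let `Sᵢ ≥ 0` with `Sᵢ` `𝒢_{i+1}`-measurable,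
`μᵢ = E[Sᵢ|𝒢ᵢ] ≤ K` a.s., `Σᵢ E|Sᵢ-μᵢ|²/i² < ∞`, so that (as assumed)
`(1/n)Σ_{i<n}(Sᵢ-μᵢ) → 0` a.s. With `X_t = sup{n : Σ_{i=0}^n Sᵢ ≤ t}` (valued in `ℝ≥0∞`,
`= ∞` if the sums stay bounded), a.s. `liminf_{t→∞} X_t/t ≥ 1/K`. -/
theorem stmt15 {Ω : Type*} {m0 : MeasurableSpace Ω} (μ : Measure Ω)
    [IsProbabilityMeasure μ]
    (𝒢 : Filtration ℕ m0) (S : ℕ → Ω → ℝ)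
    (hadp : ∀ i, StronglyMeasurable[𝒢 (i + 1)] (S i))
    (hS0 : ∀ i ω, 0 ≤ S i ω)
    (K : ℝ) (hK : 0 < K)
    (hμK : ∀ i, ∀ᵐ ω ∂μ, (μ[S i | 𝒢 i]) ω ≤ K)
    (hsum : Summable fun i : ℕ =>
      (∫ ω, (S i ω - (μ[S i | 𝒢 i]) ω) ^ 2 ∂μ) / (i : ℝ) ^ 2)
    (hlln : ∀ᵐ ω ∂μ, Tendsto
      (fun n : ℕ => (∑ i ∈ Finset.range n, (S i ω - (μ[S i | 𝒢 i]) ω)) / n)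
      atTop (nhds 0)) :
    ∀ᵐ ω ∂μ,
      ENNReal.ofReal (1 / K) ≤
        liminf (fun t : ℝ =>
          (⨆ (n : ℕ) (_ : ∑ i ∈ Finset.range (n + 1), S i ω ≤ t), (n : ℝ≥0∞))
            / ENNReal.ofReal t) atTop := by
  have hμKall : ∀ᵐ ω ∂μ, ∀ i, (μ[S i | 𝒢 i]) ω ≤ K := ae_all_iff.mpr hμK
  filter_upwards [hlln, hμKall] with ω hω1 hω2
  rw [Filter.le_liminf_iff]
  intro b hb
  have hbne : b ≠ ⊤ := (hb.trans_le le_top).ne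
  set b' := b.toReal with hb'def
  have hb'0 : 0 ≤ b' := ENNReal.toReal_nonneg
  have hb'lt : b' < 1 / K := (ENNReal.lt_ofReal_iff_toReal_lt hbne).mp hb
  set c : ℝ := (b' + 1 / K) / 2 with hc
  have hK1 : 0 < 1 / K := by positivity
  have hc0 : 0 < c := by rw [hc]; linarith
  have hbc : b' < c := by rw [hc]; linarith
  have hcK : c < 1 / K := by rw [hc]; linarith
  set K' : ℝ := 1 / c with hK'
  have hK'0 : 0 < K' := by positivity
  have hKK' : K < K' := by
    rw [hK', lt_div_iff₀ hc0]
    have h := (lt_div_iff₀ hK).mp hcK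
    linarith
  have hcK' : 1 / K' = c := by rw [hK']; field_simp
  set K₂ : ℝ := (K + K') / 2 with hK₂
  have hK₂1 : K < K₂ := by rw [hK₂]; linarith
  have hK₂2 : K₂ < K' := by rw [hK₂]; linarith
  have hK₂0 : 0 < K₂ := lt_trans hK hK₂1
  set δ : ℝ := K₂ - K with hδ
  have hδ0 : 0 < δ := by rw [hδ]; linarith
  have hev : ∀ᶠ n : ℕ in atTop,
      (∑ i ∈ Finset.range n, (S i ω - (μ[S i | 𝒢 i]) ω)) / n < δ :=
    hω1.eventually_lt_const hδ0
  obtain ⟨N₀, hN₀⟩ := eventually_atTop.mp hev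
  set N := max N₀ 1 with hNdef
  have hN1 : 1 ≤ N := le_max_right _ _
  have hbound : ∀ m : ℕ, N ≤ m → ∑ i ∈ Finset.range m, S i ω ≤ K₂ * m := by
    intro m hm
    have hm1 : 1 ≤ m := le_trans hN1 hm
    have hm0 : (0:ℝ) < m := by exact_mod_cast hm1
    have h1 : (∑ i ∈ Finset.range m, (S i ω - (μ[S i | 𝒢 i]) ω)) / m < δ :=
      hN₀ m (le_trans (le_max_left _ _) hm)
    have h2 : ∑ i ∈ Finset.range m, (S i ω - (μ[S i | 𝒢 i]) ω) < δ * m :=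
      (div_lt_iff₀ hm0).mp h1
    have h3 : ∑ i ∈ Finset.range m, (μ[S i | 𝒢 i]) ω ≤ K * m := by
      calc ∑ i ∈ Finset.range m, (μ[S i | 𝒢 i]) ω ≤ ∑ _i ∈ Finset.range m, K :=
            Finset.sum_le_sum fun i _ => hω2 i
        _ = K * m := by
            simp [Finset.sum_const, Finset.card_range, nsmul_eq_mul, mul_comm]
    have h4 : ∑ i ∈ Finset.range m, S i ω
        = ∑ i ∈ Finset.range m, (S i ω - (μ[S i | 𝒢 i]) ω)
          + ∑ i ∈ Finset.range m, (μ[S i | 𝒢 i]) ω := by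
      rw [← Finset.sum_add_distrib]; simp
    rw [h4]; rw [hδ] at h2; linarith
  rw [eventually_atTop]
  have hd0 : 0 < 1 / K' - b' := by rw [hcK']; linarith
  refine ⟨max (max ((N:ℝ) * K' + K') (K₂ * K' / (K' - K₂) + 1))
      (max (2 * K') (1 / (1 / K' - b') + 1)), fun t ht => ?_⟩
  have ht1 : (N:ℝ) * K' + K' ≤ t :=
    le_trans (le_trans (le_max_left _ _) (le_max_left _ _)) ht
  have ht2 : K₂ * K' / (K' - K₂) + 1 ≤ t :=
    le_trans (le_trans (le_max_right _ _) (le_max_left _ _)) ht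
  have ht3 : 2 * K' ≤ t :=
    le_trans (le_trans (le_max_left _ _) (le_max_right _ _)) ht
  have ht4 : 1 / (1 / K' - b') + 1 ≤ t :=
    le_trans (le_trans (le_max_right _ _) (le_max_right _ _)) ht
  have ht0 : 0 < t := lt_of_lt_of_le (by positivity) ht3
  set n := ⌊t / K'⌋₊ with hn
  have hn_le : (n:ℝ) ≤ t / K' := Nat.floor_le (by positivity)
  have hn_gt : t / K' < n + 1 := Nat.lt_floor_add_one _
  have hNn : N ≤ n := by
    apply Nat.le_floor
    rw [le_div_iff₀ hK'0]
    nlinarith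
  have hn1 : 1 ≤ n := le_trans hN1 hNn
  have hn1' : (1:ℝ) ≤ n := by exact_mod_cast hn1
  -- the key bound: partial sum up to n+1 is ≤ t
  have hdK : (0:ℝ) < K' - K₂ := by linarith
  have h5 : K₂ * K' ≤ t * (K' - K₂) := (div_le_iff₀ hdK).mp (by linarith)
  have h6 : K₂ * (t / K') ≤ t - K₂ := by
    rw [mul_div_assoc', div_le_iff₀ hK'0]
    nlinarith
  have hP : ∑ i ∈ Finset.range (n + 1), S i ω ≤ t := by
    have hb1 : ∑ i ∈ Finset.range (n + 1), S i ω ≤ K₂ * (n + 1) :=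
      by have h := hbound (n + 1) (le_trans hNn (Nat.le_succ n)); push_cast at h; linarith
    have : K₂ * ((n:ℝ) + 1) ≤ K₂ * (t / K' + 1) := by
      apply mul_le_mul_of_nonneg_left _ (le_of_lt hK₂0)
      linarith
    calc ∑ i ∈ Finset.range (n + 1), S i ω ≤ K₂ * ((n:ℝ) + 1) := by push_cast at hb1 ⊢; linarith
      _ ≤ K₂ * (t / K' + 1) := this
      _ = K₂ * (t / K') + K₂ := by ring
      _ ≤ t := by linarith
  have hsup : (n : ℝ≥0∞) ≤
      ⨆ (m : ℕ) (_ : ∑ i ∈ Finset.range (m + 1), S i ω ≤ t), (m : ℝ≥0∞) :=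
    le_iSup₂_of_le n hP le_rfl
  have h7 : 1 / t < 1 / K' - b' := by
    have h71 : 1 / t < 1 / (1 / (1 / K' - b')) :=
      one_div_lt_one_div_of_lt (by positivity) (by linarith)
    rwa [one_div_one_div] at h71
  have h8 : b' < (n:ℝ) / t := by
    have e1 : (t / K' - 1) / t = 1 / K' - 1 / t := by
      field_simp
    have e2 : (t / K' - 1) / t ≤ (n:ℝ) / t :=
      (div_le_div_iff_of_pos_right ht0).mpr (by linarith)
    calc b' < 1 / K' - 1 / t := by linarith
      _ = (t / K' - 1) / t := e1.symm
      _ ≤ (n:ℝ) / t := e2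
  have hnt0 : 0 < (n:ℝ) / t := div_pos (by linarith) ht0
  have hlt : b < (n : ℝ≥0∞) / ENNReal.ofReal t := by
    have hb_eq : b = ENNReal.ofReal b' := (ENNReal.ofReal_toReal hbne).symm
    rw [hb_eq, ← ENNReal.ofReal_natCast n, ← ENNReal.ofReal_div_of_pos ht0]
    exact (ENNReal.ofReal_lt_ofReal_iff hnt0).mpr h8
  exact hlt.trans_le (ENNReal.div_le_div_right hsup _)
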